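/- Let A_n ∈ R^{m_n×r_n} satisfy A_nᵀA_n = I for all n, and define h(X) = ½‖P_{Ω^c}(X)‖_F² − ½‖P_{Ω^c}(X) ×_1 A_1ᵀ … ×_N A_Nᵀ + P_Ω(M) ×_1 A_1ᵀ … ×_N A_Nᵀ‖_F² for tensors X ∈ R^{m_1×…×m_N}. Then h is convex in X, and its gradient is 1-Lipschitz: ‖∇h(X) − ∇h(Y)‖_F ≤ ‖X − Y‖_F for all X, Y. -/

import Mathlib

open Matrix

/-- The multilinear (Tucker) product `C ×₁ A 1 ×₂ ⋯ ×_N A N` of a core tensor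
`C ∈ ℝ^{r 1 × ⋯ × r N}` with matrices `A n ∈ ℝ^{m n × r n}`, where a tensor is
represented as a function on the product of its index sets. -/
def tucker {N : ℕ} {m r : Fin N → ℕ}
    (A : ∀ n, Matrix (Fin (m n)) (Fin (r n)) ℝ)
    (C : (∀ n, Fin (r n)) → ℝ) : (∀ n, Fin (m n)) → ℝ :=
  fun i => ∑ j : ∀ n, Fin (r n), (∏ n, A n (i n) (j n)) * C j

/-- Squared Frobenius norm of a tensor. -/
def tnorm2 {ι : Type*} [Fintype ι] (X : ι → ℝ) : ℝ := ∑ i, (X i) ^ 2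


/-- The objective `h(X) = ½‖P_{Ωᶜ}(X)‖_F² − ½‖P_{Ωᶜ}(X) ×ᵢ Aᵢᵀ + P_Ω(M) ×ᵢ Aᵢᵀ‖_F²`,
viewed as a function on the Euclidean (tensor) space. -/
noncomputable def hfun {N : ℕ} {m r : Fin N → ℕ}
    (A : ∀ n, Matrix (Fin (m n)) (Fin (r n)) ℝ)
    (Ω : Set (∀ n, Fin (m n))) [DecidablePred (· ∈ Ω)]
    (M : (∀ n, Fin (m n)) → ℝ)
    (X : EuclideanSpace ℝ (∀ n, Fin (m n))) : ℝ :=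
  (1 / 2) * tnorm2 (fun i => if i ∈ Ω then (0 : ℝ) else X i) -
    (1 / 2) * tnorm2 (fun j : ∀ n, Fin (r n) =>
      tucker (fun n => (A n)ᵀ) (fun i => if i ∈ Ω then (0 : ℝ) else X i) j +
        tucker (fun n => (A n)ᵀ) (fun i => if i ∈ Ω then M i else 0) j)

/-!
Write `P = P_{Ωᶜ}`, `T X = X ×₁ A₁ᵀ ⋯ ×_N A_Nᵀ` and `c = T P_Ω(M)`. Orthonormality of the
columns of every `A n` gives `T Tᵀ = I`, so `Q = I - TᵀT` satisfies `‖z‖² - ‖T z‖² = ‖Q z‖²`, and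
`h(X) = ½‖Q P X‖² - ⟪Tᵀ c, P X⟫ - ½‖c‖²`. This is a convex quadratic plus an affine function, with
gradient `(QP)ᵀ(QP) X - P Tᵀ c`, which is `‖QP‖²`-Lipschitz; and `‖Q‖, ‖P‖ ≤ 1`.
-/

open Set ContinuousLinearMap
open scoped InnerProduct RealInnerProductSpace

section Quadratic

variable {E F : Type*} [NormedAddCommGroup E] [InnerProductSpace ℝ E]
  [NormedAddCommGroup F] [InnerProductSpace ℝ F]

theorem convexOn_half_norm_sq_comp_sub (L : E →L[ℝ] F) (ℓ : StrongDual ℝ E) (k : ℝ) :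
    ConvexOn ℝ univ (fun x => 1 / 2 * ‖L x‖ ^ 2 - ℓ x - k) :=
  have hsq : ConvexOn ℝ univ (fun y : F => 1 / 2 * ‖y‖ ^ 2) :=
    ((convexOn_norm convex_univ).pow (fun _ _ => norm_nonneg _) 2).smul (by norm_num)
  ((hsq.comp_linearMap L.toLinearMap).sub (ℓ.toLinearMap.concaveOn convex_univ)).add_const (-k)

variable [CompleteSpace E] [CompleteSpace F]

theorem hasGradientAt_half_norm_sq_comp_sub (L : E →L[ℝ] F) (ℓ : StrongDual ℝ E) (k : ℝ)
    (x : E) :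
    HasGradientAt (fun x => 1 / 2 * ‖L x‖ ^ 2 - ℓ x - k)
      ((L† ∘L L) x - (InnerProductSpace.toDual ℝ E).symm ℓ) x := by
  rw [hasGradientAt_iff_hasFDerivAt]
  refine ((((L.hasFDerivAt (x := x)).norm_sq.const_mul (1 / 2)).sub ℓ.hasFDerivAt).sub_const
    k).congr_fderiv ?_
  ext v
  simp [adjoint_inner_left]

theorem lipschitzWith_gradient_half_norm_sq_comp_sub (L : E →L[ℝ] F) (ℓ : StrongDual ℝ E)
    (k : ℝ) : LipschitzWith (‖L‖₊ ^ 2) (gradient fun x => 1 / 2 * ‖L x‖ ^ 2 - ℓ x - k) := by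
  refine LipschitzWith.of_dist_le_mul fun x y => ?_
  rw [(hasGradientAt_half_norm_sq_comp_sub L ℓ k x).gradient,
    (hasGradientAt_half_norm_sq_comp_sub L ℓ k y).gradient, dist_eq_norm, dist_eq_norm,
    sub_sub_sub_cancel_right, ← map_sub]
  calc ‖(L† ∘L L) (x - y)‖ ≤ ‖L† ∘L L‖ * ‖x - y‖ := le_opNorm _ _
    _ = ‖L‖₊ ^ 2 * ‖x - y‖ := by rw [norm_adjoint_comp_self, sq]; rfl

end Quadratic

section Coisometry

variable {E F : Type*} [NormedAddCommGroup E] [InnerProductSpace ℝ E] [CompleteSpace E]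
  [NormedAddCommGroup F] [InnerProductSpace ℝ F] [CompleteSpace F] {T : E →L[ℝ] F}

theorem norm_sq_sub_norm_sq_apply_of_comp_adjoint_eq_one (hT : T ∘L T† = 1) (x : E) :
    ‖x‖ ^ 2 - ‖T x‖ ^ 2 = ‖(1 - T† ∘L T) x‖ ^ 2 := by
  have hTT : T ((T†) (T x)) = T x := congr($hT (T x))
  have h₁ : ⟪x, (T†) (T x)⟫ = ‖T x‖ ^ 2 := by
    rw [adjoint_inner_right, real_inner_self_eq_norm_sq]
  have h₂ : ‖(T†) (T x)‖ ^ 2 = ‖T x‖ ^ 2 := by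
    rw [← real_inner_self_eq_norm_sq, adjoint_inner_right, hTT, real_inner_self_eq_norm_sq]
  rw [_root_.sub_apply, one_apply_eq_self, ContinuousLinearMap.comp_apply, norm_sub_sq_real, h₁,
    h₂]
  ring

theorem norm_one_sub_adjoint_comp_self_le (hT : T ∘L T† = 1) : ‖1 - T† ∘L T‖ ≤ 1 := by
  refine opNorm_le_bound _ zero_le_one fun x => ?_
  have := norm_sq_sub_norm_sq_apply_of_comp_adjoint_eq_one hT x
  nlinarith [norm_nonneg x, norm_nonneg ((1 - T† ∘L T) x), norm_nonneg (T x)]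

theorem half_norm_sq_sub_half_norm_sq_add_eq (hT : T ∘L T† = 1) (P : E →L[ℝ] E) (c : F) :
    (fun x => 1 / 2 * ‖P x‖ ^ 2 - 1 / 2 * ‖T (P x) + c‖ ^ 2) = fun x =>
      1 / 2 * ‖((1 - T† ∘L T) ∘L P) x‖ ^ 2 - (innerSL ℝ ((T†) c) ∘L P) x - 1 / 2 * ‖c‖ ^ 2 := by
  funext x
  rw [ContinuousLinearMap.comp_apply, ContinuousLinearMap.comp_apply,
    ← norm_sq_sub_norm_sq_apply_of_comp_adjoint_eq_one hT, norm_add_sq_real, innerSL_apply_apply,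
    adjoint_inner_left, real_inner_comm]
  ring

theorem convexOn_half_norm_sq_sub_half_norm_sq_add (hT : T ∘L T† = 1) (P : E →L[ℝ] E)
    (c : F) : ConvexOn ℝ univ (fun x => 1 / 2 * ‖P x‖ ^ 2 - 1 / 2 * ‖T (P x) + c‖ ^ 2) := by
  rw [half_norm_sq_sub_half_norm_sq_add_eq hT]
  exact convexOn_half_norm_sq_comp_sub _ _ _

theorem lipschitzWith_one_gradient_half_norm_sq_sub_half_norm_sq_add (hT : T ∘L T† = 1)
    {P : E →L[ℝ] E} (hP : ‖P‖ ≤ 1) (c : F) :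
    LipschitzWith 1 (gradient fun x => 1 / 2 * ‖P x‖ ^ 2 - 1 / 2 * ‖T (P x) + c‖ ^ 2) := by
  rw [half_norm_sq_sub_half_norm_sq_add_eq hT]
  refine (lipschitzWith_gradient_half_norm_sq_comp_sub _ _ _).weaken ?_
  have hL : ‖(1 - T† ∘L T) ∘L P‖ ≤ 1 :=
    (opNorm_comp_le _ _).trans (mul_le_one₀ (norm_one_sub_adjoint_comp_self_le hT)
      (norm_nonneg _) hP)
  rw [← NNReal.coe_le_coe, NNReal.coe_pow, coe_nnnorm, NNReal.coe_one]
  exact pow_le_one₀ (norm_nonneg _) hL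

end Coisometry

namespace Matrix

variable {ι R : Type*} [Fintype ι] [CommSemiring R] {α β γ : ι → Type*}

def piKronecker (A : ∀ n, Matrix (α n) (β n) R) : Matrix (∀ n, α n) (∀ n, β n) R :=
  of fun i j => ∏ n, A n (i n) (j n)

theorem transpose_piKronecker (A : ∀ n, Matrix (α n) (β n) R) :
    (piKronecker A)ᵀ = piKronecker fun n => (A n)ᵀ :=
  rfl

theorem piKronecker_mul [DecidableEq ι] [∀ n, Fintype (β n)] (A : ∀ n, Matrix (α n) (β n) R)
    (B : ∀ n, Matrix (β n) (γ n) R) :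
    piKronecker A * piKronecker B = piKronecker fun n => A n * B n := by
  ext i k
  simp only [piKronecker, mul_apply, of_apply, ← Finset.prod_mul_distrib]
  exact (Fintype.prod_sum fun n b => A n (i n) b * B n b (k n)).symm

theorem piKronecker_one [∀ n, DecidableEq (α n)] :
    piKronecker (fun n => (1 : Matrix (α n) (α n) R)) = 1 := by
  ext i j
  simp [piKronecker, one_apply, Finset.prod_boole, funext_iff]

theorem isStarProjection_diagonal {n R : Type*} [Fintype n] [DecidableEq n] [Semiring R]
    [StarRing R] {d : n → R} (hd : ∀ i, IsStarProjection (d i)) :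
    IsStarProjection (diagonal d) where
  isIdempotentElem := by
    rw [IsIdempotentElem, diagonal_mul_diagonal]
    exact congrArg diagonal (funext fun i => (hd i).isIdempotentElem)
  isSelfAdjoint := by
    rw [IsSelfAdjoint, star_eq_conjTranspose, diagonal_conjTranspose]
    exact congrArg diagonal (funext fun i => (hd i).isSelfAdjoint)

theorem toEuclideanLin_comp_adjoint_eq_one {𝕜 m n : Type*} [RCLike 𝕜]
    [Fintype m] [DecidableEq m] [Fintype n] [DecidableEq n] {B : Matrix m n 𝕜}
    (hB : B * Bᴴ = 1) :
    (toEuclideanLin B).toContinuousLinearMap ∘L (toEuclideanLin B).toContinuousLinearMap† =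
      1 := by
  rw [← LinearMap.adjoint_toContinuousLinearMap, ← toEuclideanLin_conjTranspose_eq_adjoint]
  ext x i
  simp [mulVec_mulVec, hB]

end Matrix

section Tensor

variable {ι : Type*} [Fintype ι] [DecidableEq ι]

/-- The paper's `P_{Ωᶜ}`. -/
noncomputable def projCompl (Ω : Set ι) [DecidablePred (· ∈ Ω)] :
    EuclideanSpace ℝ ι →L[ℝ] EuclideanSpace ℝ ι :=
  toEuclideanCLM (𝕜 := ℝ) (diagonal fun i => if i ∈ Ω then 0 else 1)

theorem ofLp_projCompl (Ω : Set ι) [DecidablePred (· ∈ Ω)] (X : EuclideanSpace ℝ ι) :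
    (projCompl Ω X).ofLp = fun i => if i ∈ Ω then 0 else X i := by
  ext i
  simp [projCompl, mulVec_diagonal]

theorem norm_projCompl_le (Ω : Set ι) [DecidablePred (· ∈ Ω)] : ‖projCompl Ω‖ ≤ 1 :=
  IsStarProjection.norm_le _ ((isStarProjection_diagonal fun i => by
    split_ifs; exacts [.zero _, .one _]).map (toEuclideanCLM (𝕜 := ℝ)))

variable {N : ℕ} {m r : Fin N → ℕ}

noncomputable def tuckerCLM (B : ∀ n, Matrix (Fin (r n)) (Fin (m n)) ℝ) :
    EuclideanSpace ℝ (∀ n, Fin (m n)) →L[ℝ] EuclideanSpace ℝ (∀ n, Fin (r n)) :=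
  (toEuclideanLin (piKronecker B)).toContinuousLinearMap

theorem tuckerCLM_apply (B : ∀ n, Matrix (Fin (r n)) (Fin (m n)) ℝ)
    (X : EuclideanSpace ℝ (∀ n, Fin (m n))) : tuckerCLM B X = WithLp.toLp 2 (tucker B X) :=
  rfl

theorem tuckerCLM_transpose_comp_adjoint {A : ∀ n, Matrix (Fin (m n)) (Fin (r n)) ℝ}
    (hA : ∀ n, (A n)ᵀ * A n = 1) :
    tuckerCLM (fun n => (A n)ᵀ) ∘L (tuckerCLM fun n => (A n)ᵀ)† = 1 := by
  refine toEuclideanLin_comp_adjoint_eq_one ?_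
  rw [conjTranspose_eq_transpose_of_trivial, transpose_piKronecker, piKronecker_mul]
  simp only [transpose_transpose, hA, piKronecker_one]

theorem hfun_eq_half_norm_sq_sub_half_norm_sq_add (A : ∀ n, Matrix (Fin (m n)) (Fin (r n)) ℝ)
    (Ω : Set (∀ n, Fin (m n))) [DecidablePred (· ∈ Ω)] (M : (∀ n, Fin (m n)) → ℝ) :
    hfun A Ω M = fun X => 1 / 2 * ‖projCompl Ω X‖ ^ 2 -
      1 / 2 * ‖tuckerCLM (fun n => (A n)ᵀ) (projCompl Ω X) +
        tuckerCLM (fun n => (A n)ᵀ) (WithLp.toLp 2 fun i => if i ∈ Ω then M i else 0)‖ ^ 2 := by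
  funext X
  simp only [hfun, tnorm2, EuclideanSpace.real_norm_sq_eq, PiLp.add_apply, tuckerCLM_apply,
    ofLp_projCompl]

end Tensor

/-- If every `A n` has orthonormal columns, then `h` is convex and its gradient is
`1`-Lipschitz. -/
theorem stmt_8 {N : ℕ} {m r : Fin N → ℕ}
    (A : ∀ n, Matrix (Fin (m n)) (Fin (r n)) ℝ)
    (hA : ∀ n, (A n)ᵀ * A n = 1)
    (Ω : Set (∀ n, Fin (m n))) [DecidablePred (· ∈ Ω)]
    (M : (∀ n, Fin (m n)) → ℝ) :
    ConvexOn ℝ Set.univ (hfun A Ω M) ∧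
      ∀ X Y : EuclideanSpace ℝ (∀ n, Fin (m n)),
        ‖gradient (hfun A Ω M) X - gradient (hfun A Ω M) Y‖ ≤ ‖X - Y‖ := by
  have hT := tuckerCLM_transpose_comp_adjoint hA
  rw [hfun_eq_half_norm_sq_sub_half_norm_sq_add]
  refine ⟨convexOn_half_norm_sq_sub_half_norm_sq_add hT _ _, fun X Y => ?_⟩
  simpa [dist_eq_norm] using
    (lipschitzWith_one_gradient_half_norm_sq_sub_half_norm_sq_add hT (norm_projCompl_le Ω)
      _).dist_le_mul X Y
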